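/- Let (a,b) solve da/dt = (Pa/t)(b - 1/P), db/dt = (P/(2t))(1-b²) - (PQ/2)(1-a²) - Qb on a neighbourhood of t₀ > 0, with P(t) = √6√(2t²+2)/√(2t²+3), Q(t) = t/(t²+1). If a(t₀) > 0 and b(t₀) < 0, then the solution cannot be extended continuously backwards to a bounded solution on (0, t₀]; in fact a(t) ≥ a(t₀)t₀/t for all t ∈ (0, t₀] on which the solution exists. -/

import Mathlib

/-!
At `b = 0` the second equation reads `b' = P (1 + t²a²) / (2t(t²+1)) > 0`, so followed backwards
from `b(t₀) < 0` the function `b` can never reach `0`. Along the flow `(t a)' = P a b`, which is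
therefore negative wherever `t a > 0`; followed backwards, `t a` can never drop to any level
`y ∈ (0, t₀ a(t₀))`. Hence `t a(t) ≥ t₀ a(t₀)`, and `a` blows up like `1/t` at `0`.
-/

/-- Metric coefficient `P(t) = √6·√(2t²+2)/√(2t²+3)`. -/
noncomputable def Pfun (t : ℝ) : ℝ := Real.sqrt 6 * Real.sqrt (2 * t ^ 2 + 2) / Real.sqrt (2 * t ^ 2 + 3)

/-- Metric coefficient `Q(t) = t/(t²+1)`. -/
noncomputable def Qfun (t : ℝ) : ℝ := t / (t ^ 2 + 1)

/-- `(a,b)` solves the invariant Spin(7) instanton system on the set `s`. -/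
def SolvesSpin7 (a b : ℝ → ℝ) (s : Set ℝ) : Prop :=
  ∀ t ∈ s,
    HasDerivAt a (Pfun t * a t / t * (b t - 1 / Pfun t)) t ∧
    HasDerivAt b
      (Pfun t / (2 * t) * (1 - (b t) ^ 2) - Pfun t * Qfun t / 2 * (1 - (a t) ^ 2) - Qfun t * b t) t

open Set Filter Topology

theorem HasDerivAt.eventually_nhdsGT_lt_of_neg {f : ℝ → ℝ} {d x : ℝ} (hf : HasDerivAt f d x)
    (hd : d < 0) : ∀ᶠ y in 𝓝[>] x, f y < f x := by
  have hslope : Tendsto (slope f x) (𝓝[>] x) (𝓝 d) :=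
    (hasDerivAt_iff_tendsto_slope.mp hf).mono_left (nhdsWithin_mono _ fun _ hy => ne_of_gt hy)
  filter_upwards [hslope.eventually (eventually_lt_nhds hd), self_mem_nhdsWithin] with y hy hxy
  rw [slope_def_field, div_lt_iff₀ (sub_pos.2 hxy), zero_mul] at hy
  linarith

theorem lt_of_hasDerivAt_neg_of_eq {f : ℝ → ℝ} {s t₀ c : ℝ} (hf : ContinuousOn f (Ioc s t₀))
    (hcross : ∀ t ∈ Ioo s t₀, f t = c → ∃ d < 0, HasDerivAt f d t) (h₀ : c < f t₀) :
    ∀ t ∈ Ioc s t₀, c < f t := by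
  intro τ hτ
  by_contra! hτc
  have hclosed : IsClosed (Icc τ t₀ ∩ f ⁻¹' Iic c) :=
    (hf.mono (Icc_subset_Ioc hτ.1 le_rfl)).preimage_isClosed_of_isClosed isClosed_Icc isClosed_Iic
  obtain ⟨T, ⟨⟨hτT, hTt₀⟩, hfT⟩, hTmax⟩ :=
    (isCompact_Icc.of_isClosed_subset hclosed inter_subset_left).exists_isGreatest
      ⟨τ, left_mem_Icc.2 hτ.2, hτc⟩
  have hTt₀' : T < t₀ := hTt₀.lt_of_ne (by rintro rfl; exact hfT.not_gt h₀)
  have hright : ∀ t ∈ Ioc T t₀, c < f t := fun t ht =>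
    not_le.1 fun h => ht.1.not_ge (hTmax ⟨⟨hτT.trans ht.1.le, ht.2⟩, h⟩)
  have hTmem : T ∈ Ioo s t₀ := ⟨hτ.1.trans_le hτT, hTt₀'⟩
  have hfTc : f T = c := by
    have hcont : Tendsto f (𝓝[>] T) (𝓝 (f T)) :=
      (hf.continuousAt (Ioc_mem_nhds hTmem.1 hTt₀')).tendsto.mono_left nhdsWithin_le_nhds
    exact hfT.antisymm <| ge_of_tendsto hcont <|
      mem_of_superset (Ioc_mem_nhdsGT hTt₀') fun t ht => (hright t ht).le
  obtain ⟨d, hd, hder⟩ := hcross T hTmem hfTc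
  obtain ⟨t, hlt, ht⟩ := ((hder.eventually_nhdsGT_lt_of_neg hd).and (Ioc_mem_nhdsGT hTt₀')).exists
  linarith [hright t ht]

theorem not_bddAbove_image_Ioc_of_div_le {f : ℝ → ℝ} {C t₀ : ℝ} (hC : 0 < C) (ht₀ : 0 < t₀)
    (hf : ∀ t ∈ Ioc 0 t₀, C / t ≤ f t) : ¬ BddAbove (f '' Ioc 0 t₀) := by
  rintro ⟨M, hM⟩
  have hlim : Tendsto f (𝓝[>] 0) atTop := by
    refine tendsto_atTop_mono' _ (mem_of_superset (Ioc_mem_nhdsGT ht₀) hf) ?_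
    exact (tendsto_inv_nhdsGT_zero.const_mul_atTop hC).congr fun t => (div_eq_mul_inv C t).symm
  obtain ⟨t, hMt, ht⟩ := ((hlim.eventually_gt_atTop M).and (Ioc_mem_nhdsGT ht₀)).exists
  exact (hM (mem_image_of_mem f ht)).not_gt hMt

theorem Pfun_pos (t : ℝ) : 0 < Pfun t := by
  unfold Pfun
  have h₂ : (0 : ℝ) < 2 * t ^ 2 + 2 := by positivity
  have h₃ : (0 : ℝ) < 2 * t ^ 2 + 3 := by positivity
  positivity

namespace SolvesSpin7

variable {a b : ℝ → ℝ} {s t₀ : ℝ}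

theorem hasDerivAt_mul_fst {S : Set ℝ} (h : SolvesSpin7 a b S) {t : ℝ} (ht : t ∈ S)
    (ht₀ : t ≠ 0) : HasDerivAt (fun u => u * a u) (Pfun t * a t * b t) t := by
  have hder : HasDerivAt (fun u => u * a u)
      (1 * a t + t * (Pfun t * a t / t * (b t - 1 / Pfun t))) t :=
    (hasDerivAt_id' t).mul (h t ht).1
  convert hder using 1
  have := (Pfun_pos t).ne'
  field_simp
  ring

theorem snd_neg (h : SolvesSpin7 a b (Ioc s t₀)) (hs : 0 ≤ s) (hb : b t₀ < 0) :
    ∀ t ∈ Ioc s t₀, b t < 0 := by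
  have hcont : ContinuousOn (fun t => -b t) (Ioc s t₀) := fun t ht =>
    (h t ht).2.continuousAt.neg.continuousWithinAt
  refine fun t ht => neg_pos.1 (lt_of_hasDerivAt_neg_of_eq hcont ?_ (by linarith) t ht)
  intro t ht hbt
  have htpos : 0 < t := hs.trans_lt ht.1
  have hP := Pfun_pos t
  refine ⟨_, ?_, (h t (Ioo_subset_Ioc_self ht)).2.neg⟩
  rw [neg_eq_zero.1 hbt, Qfun]
  have hval : Pfun t / (2 * t) * (1 - 0 ^ 2) - Pfun t * (t / (t ^ 2 + 1)) / 2 * (1 - a t ^ 2)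
      - t / (t ^ 2 + 1) * 0 = Pfun t * (1 + t ^ 2 * a t ^ 2) / (2 * t * (t ^ 2 + 1)) := by
    field_simp
    ring
  rw [hval, neg_neg_iff_pos]
  positivity

theorem mul_fst_ge (h : SolvesSpin7 a b (Ioc s t₀)) (hs : 0 ≤ s) (ha : 0 < a t₀)
    (hb : b t₀ < 0) : ∀ t ∈ Ioc s t₀, t₀ * a t₀ ≤ t * a t := by
  have hbneg := h.snd_neg hs hb
  have hcont : ContinuousOn (fun u => u * a u) (Ioc s t₀) := fun t ht =>
    (continuousAt_id.mul (h t ht).1.continuousAt).continuousWithinAt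
  have hlevel : ∀ y, 0 < y → y < t₀ * a t₀ → ∀ t ∈ Ioc s t₀, y < t * a t := by
    intro y hy hyt₀
    refine lt_of_hasDerivAt_neg_of_eq hcont (fun t ht hty => ?_) hyt₀
    have htpos : 0 < t := hs.trans_lt ht.1
    have hat : 0 < a t := pos_of_mul_pos_right (hty ▸ hy : 0 < t * a t) htpos.le
    exact ⟨_, mul_neg_of_pos_of_neg (mul_pos (Pfun_pos t) hat) (hbneg t (Ioo_subset_Ioc_self ht)),
      h.hasDerivAt_mul_fst (Ioo_subset_Ioc_self ht) htpos.ne'⟩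
  intro t ht
  have hpos : 0 < t₀ * a t₀ := mul_pos ((hs.trans_lt ht.1).trans_le ht.2) ha
  refine le_of_forall_lt fun c hc => ?_
  exact (le_max_left c _).trans_lt
    (hlevel _ (lt_max_of_lt_right (half_pos hpos)) (max_lt hc (half_lt_self hpos)) t ht)

theorem div_le_fst (h : SolvesSpin7 a b (Ioc s t₀)) (hs : 0 ≤ s) (ha : 0 < a t₀)
    (hb : b t₀ < 0) : ∀ t ∈ Ioc s t₀, a t₀ * t₀ / t ≤ a t := by
  intro t ht
  rw [div_le_iff₀ (hs.trans_lt ht.1), mul_comm (a t₀), mul_comm (a t)]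
  exact h.mul_fst_ge hs ha hb t ht

end SolvesSpin7

/-- Backwards blowup: if `a(t₀) > 0` and `b(t₀) < 0`, then on any interval `(s, t₀]` on which
the solution exists one has `a(t) ≥ a(t₀)t₀/t`; in particular the solution cannot be extended
backwards to a bounded solution on `(0, t₀]`. -/
theorem spin7_backwards_blowup (a b : ℝ → ℝ) (s t₀ : ℝ)
    (hs : 0 ≤ s) (hst : s < t₀)
    (hsol : SolvesSpin7 a b (Set.Ioc s t₀))
    (ha : 0 < a t₀) (hb : b t₀ < 0) :
    (∀ t ∈ Set.Ioc s t₀, a t₀ * t₀ / t ≤ a t) ∧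
    (s = 0 → ¬ BddAbove (a '' Set.Ioc s t₀)) := by
  have hlower := hsol.div_le_fst hs ha hb
  refine ⟨hlower, fun hs₀ => ?_⟩
  subst hs₀
  exact not_bddAbove_image_Ioc_of_div_le (mul_pos ha hst) hst hlower
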